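/- arXiv:2308.15760 — 5 statements merged into one kernel-verified Lean document; each statement's English description precedes it below -/
import Mathlib

section
/- Let S : ℝⁿ ⇉ ℝᵐ be a set-valued mapping with closed graph and (x̄, ū) ∈ gph S. Then S is strongly metrically subregular at x̄ for ū (i.e., metrically subregular at x̄ for ū and x̄ is an isolated point of S^{-1}(ū)) if and only if DS(x̄ | ū)^{-1}(0) = {0}, where DS(x̄ | ū) is the graphical derivative of S at (x̄, ū). -/
open Filter Topology
open scoped ENNReal NNReal

noncomputable section

abbrev En (n : ℕ) := EuclideanSpace ℝ (Fin n)

/-- The graphical derivative `DS(x | u)` of a set-valued mapping `S` at a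
point `(x, u)` of its graph: `z ∈ DS(x|u)(w)` iff `(w, z)` is tangent to
`gph S` at `(x, u)`. -/
def GraphDerivSV {n m : ℕ} (S : En n → Set (En m)) (x : En n) (u : En m)
    (w : En n) : Set (En m) :=
  {z | ∃ (t : ℕ → ℝ) (wk : ℕ → En n) (zk : ℕ → En m),
      Tendsto t atTop (nhdsWithin 0 (Set.Ioi 0)) ∧
      Tendsto wk atTop (nhds w) ∧ Tendsto zk atTop (nhds z) ∧
      ∀ k, u + t k • zk k ∈ S (x + t k • wk k)}

/-! Both conditions of the theorem are reduced to the estimate `‖x - xb‖ ≤ κ d(ub, S x)` near `xb`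
(Dontchev–Rockafellar's definition of strong metric subregularity). Along a tangent direction
`(w, 0)` this estimate gives `‖w‖ ≤ κ ‖0‖`. Conversely, if it fails, there are `xₖ → xb`,
`uₖ ∈ S xₖ` with `‖uₖ - ub‖ = o(‖xₖ - xb‖)`; a limit point of the unit vectors
`(xₖ - xb) / ‖xₖ - xb‖` is a nonzero `w` with `0 ∈ DS(xb|ub)(w)`. -/

def StronglyMetricallySubregularAt {X Y : Type*} [PseudoEMetricSpace X] [PseudoEMetricSpace Y]
    (S : X → Set Y) (xb : X) (ub : Y) : Prop :=
  ∃ κ : ℝ≥0, ∀ᶠ x in 𝓝 xb, edist x xb ≤ κ * Metric.infEDist ub (S x)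

section MetricSpace

variable {X Y : Type*}

lemma edist_le_infEDist_of_isolated [PseudoMetricSpace X] {A : Set X} {a x : X} {δ : ℝ}
    (hiso : ∀ y ∈ A, dist y a < δ → y = a) (hx : 2 * dist x a < δ) :
    edist x a ≤ Metric.infEDist x A := by
  refine Metric.le_infEDist.2 fun y hy => ?_
  by_cases hya : dist y a < δ
  · rw [hiso y hy hya]
  · rw [edist_dist, edist_dist]
    refine ENNReal.ofReal_le_ofReal ?_
    linarith [dist_triangle y x a, dist_comm x y]

variable [MetricSpace X] [PseudoEMetricSpace Y] {S : X → Set Y} {xb : X} {ub : Y}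

theorem stronglyMetricallySubregularAt_iff_subregular_and_isolated (hmem : ub ∈ S xb) :
    StronglyMetricallySubregularAt S xb ub ↔
      (∃ κ : ℝ≥0, ∀ᶠ x in 𝓝 xb,
          Metric.infEDist x {y | ub ∈ S y} ≤ κ * Metric.infEDist ub (S x)) ∧
        ∀ᶠ y in 𝓝 xb, ub ∈ S y → y = xb := by
  constructor
  · rintro ⟨κ, hκ⟩
    have hxb : xb ∈ {y | ub ∈ S y} := hmem
    refine ⟨⟨κ, hκ.mono fun x hx => (Metric.infEDist_le_edist_of_mem hxb).trans hx⟩, ?_⟩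
    filter_upwards [hκ] with y hy hyS
    rw [Metric.infEDist_zero_of_mem hyS, mul_zero, nonpos_iff_eq_zero, edist_eq_zero] at hy
    exact hy
  · rintro ⟨⟨κ, hκ⟩, hiso⟩
    obtain ⟨δ, hδ, hiso⟩ := Metric.eventually_nhds_iff.1 hiso
    have hnear : ∀ᶠ x in 𝓝 xb, 2 * dist x xb < δ :=
      Metric.eventually_nhds_iff.2 ⟨δ / 2, half_pos hδ, fun x hx => by linarith⟩
    refine ⟨κ, ?_⟩
    filter_upwards [hκ, hnear] with x hx hxδ
    exact (edist_le_infEDist_of_isolated (fun y hy hyδ => hiso hyδ hy) hxδ).trans hx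

end MetricSpace

lemma exists_pos_ofReal_mul_le_iff {α : Type*} {l : Filter α} {a b : α → ℝ≥0∞} :
    (∃ κ : ℝ, 0 < κ ∧ ∀ᶠ x in l, a x ≤ ENNReal.ofReal κ * b x) ↔
      ∃ κ : ℝ≥0, ∀ᶠ x in l, a x ≤ κ * b x := by
  constructor
  · rintro ⟨κ, -, hκ⟩
    exact ⟨κ.toNNReal, hκ⟩
  · rintro ⟨κ, hκ⟩
    refine ⟨κ + 1, by positivity, hκ.mono fun x hx => hx.trans ?_⟩
    gcongr
    rw [ENNReal.ofReal_add κ.coe_nonneg zero_le_one, ENNReal.ofReal_coe_nnreal]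
    exact le_self_add

lemma exists_pos_forall_norm_sub_lt_iff {E : Type*} [SeminormedAddCommGroup E] {xb : E}
    {p : E → Prop} : (∃ δ : ℝ, 0 < δ ∧ ∀ x, ‖x - xb‖ < δ → p x) ↔ ∀ᶠ x in 𝓝 xb, p x := by
  simp only [Metric.eventually_nhds_iff, dist_eq_norm, gt_iff_lt]

section GraphicalDerivative

variable {n m : ℕ} {S : En n → Set (En m)} {xb : En n} {ub : En m}

lemma zero_mem_graphDerivSV_zero (hmem : ub ∈ S xb) : (0 : En m) ∈ GraphDerivSV S xb ub 0 := by
  refine ⟨fun k => 1 / (k + 1), fun _ => 0, fun _ => 0, ?_, tendsto_const_nhds,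
    tendsto_const_nhds, fun k => by simpa using hmem⟩
  exact tendsto_nhdsWithin_iff.2 ⟨tendsto_one_div_add_atTop_nhds_zero_nat,
    Eventually.of_forall fun k => Set.mem_Ioi.2 (by positivity)⟩

lemma eq_zero_of_zero_mem_graphDerivSV (h : StronglyMetricallySubregularAt S xb ub) {w : En n}
    (hw : (0 : En m) ∈ GraphDerivSV S xb ub w) : w = 0 := by
  obtain ⟨κ, hκ⟩ := h
  obtain ⟨t, wk, zk, ht, hwk, hzk, hmemk⟩ := hw
  obtain ⟨ht0, htpos⟩ := tendsto_nhdsWithin_iff.1 ht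
  have hx : Tendsto (fun k => xb + t k • wk k) atTop (𝓝 xb) := by
    simpa using tendsto_const_nhds.add (ht0.smul hwk)
  have hbound : ∀ᶠ k in atTop, ‖wk k‖ₑ ≤ κ * ‖zk k‖ₑ := by
    filter_upwards [hx.eventually hκ, htpos] with k hk htk
    have htk0 : ‖t k‖ₑ ≠ 0 := enorm_ne_zero.2 (ne_of_gt htk)
    have hscaled : ‖t k‖ₑ * ‖wk k‖ₑ ≤ ‖t k‖ₑ * (κ * ‖zk k‖ₑ) := calc
      ‖t k‖ₑ * ‖wk k‖ₑ = edist (xb + t k • wk k) xb := by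
        rw [edist_eq_enorm_sub, add_sub_cancel_left, enorm_smul]
      _ ≤ κ * Metric.infEDist ub (S (xb + t k • wk k)) := hk
      _ ≤ κ * edist ub (ub + t k • zk k) := by
        gcongr; exact Metric.infEDist_le_edist_of_mem (hmemk k)
      _ = ‖t k‖ₑ * (κ * ‖zk k‖ₑ) := by
        rw [edist_comm, edist_eq_enorm_sub, add_sub_cancel_left, enorm_smul, mul_left_comm]
    exact (ENNReal.mul_le_mul_iff_right htk0 enorm_ne_top).1 hscaled
  have hlim : Tendsto (fun k => (κ : ℝ≥0∞) * ‖zk k‖ₑ) atTop (𝓝 0) := by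
    simpa using ENNReal.Tendsto.const_mul hzk.enorm (Or.inr ENNReal.coe_ne_top)
  have hw : ‖w‖ₑ ≤ 0 := le_of_tendsto_of_tendsto hwk.enorm hlim hbound
  simpa using hw

lemma exists_ne_zero_zero_mem_graphDerivSV {x : ℕ → En n} {u : ℕ → En m}
    (hx : Tendsto x atTop (𝓝 xb)) (hne : ∀ k, x k ≠ xb) (hu : ∀ k, u k ∈ S (x k))
    (hrate : Tendsto (fun k => ‖x k - xb‖⁻¹ * ‖u k - ub‖) atTop (𝓝 0)) :
    ∃ w ≠ 0, (0 : En m) ∈ GraphDerivSV S xb ub w := by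
  set t := fun k => ‖x k - xb‖
  have htpos : ∀ k, 0 < t k := fun k => norm_pos_iff.2 (sub_ne_zero.2 (hne k))
  set wk := fun k => (t k)⁻¹ • (x k - xb)
  set zk := fun k => (t k)⁻¹ • (u k - ub)
  have hwk : ∀ k, wk k ∈ Metric.sphere (0 : En n) 1 := fun k => by
    simp [wk, t, norm_smul, (htpos k).ne']
  obtain ⟨w, hw, φ, hφ, hwφ⟩ := (isCompact_sphere (0 : En n) 1).tendsto_subseq hwk
  have hzk : Tendsto zk atTop (𝓝 0) := by
    refine tendsto_zero_iff_norm_tendsto_zero.2 (hrate.congr fun k => ?_)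
    simp [zk, t, norm_smul]
  refine ⟨w, ne_zero_of_mem_unit_sphere ⟨w, hw⟩, t ∘ φ, wk ∘ φ, zk ∘ φ, ?_, hwφ,
    hzk.comp hφ.tendsto_atTop, fun k => ?_⟩
  · exact tendsto_nhdsWithin_iff.2 ⟨(tendsto_iff_norm_sub_tendsto_zero.1 hx).comp
      hφ.tendsto_atTop, Eventually.of_forall fun k => htpos (φ k)⟩
  · simpa [wk, zk, smul_inv_smul₀ (htpos (φ k)).ne'] using hu (φ k)

lemma exists_seq_of_not_stronglyMetricallySubregularAt
    (h : ¬StronglyMetricallySubregularAt S xb ub) (k : ℕ) :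
    ∃ x u, u ∈ S x ∧ ‖x - xb‖ < 1 / (k + 1) ∧ (k + 1) * ‖u - ub‖ < ‖x - xb‖ := by
  simp only [StronglyMetricallySubregularAt, not_exists, not_eventually, not_le] at h
  have hball : Metric.ball xb (1 / (k + 1)) ∈ 𝓝 xb := Metric.ball_mem_nhds xb (by positivity)
  obtain ⟨x, hx, hxδ⟩ := ((h (k + 1)).and_eventually hball).exists
  have hinf : Metric.infEDist ub (S x) < edist x xb / (k + 1) :=
    (ENNReal.lt_div_iff_mul_lt (by simp) (by simp)).2 (by rw [mul_comm]; exact_mod_cast hx)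
  obtain ⟨u, hu, hdist⟩ := Metric.infEDist_lt_iff.1 hinf
  refine ⟨x, u, hu, by rwa [dist_eq_norm] at hxδ, ?_⟩
  rw [ENNReal.lt_div_iff_mul_lt (by simp) (by simp), edist_comm, edist_dist, edist_dist,
    dist_eq_norm, dist_eq_norm,
    show ((k : ℝ≥0∞) + 1) = ENNReal.ofReal (k + 1) by simp [ENNReal.ofReal_add],
    ← ENNReal.ofReal_mul (norm_nonneg _), ENNReal.ofReal_lt_ofReal_iff_of_nonneg (by positivity),
    mul_comm] at hdist
  exact hdist

lemma stronglyMetricallySubregularAt_of_graphDerivSV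
    (hD : ∀ w, (0 : En m) ∈ GraphDerivSV S xb ub w → w = 0) :
    StronglyMetricallySubregularAt S xb ub := by
  by_contra h
  choose x u hu hx hxu using exists_seq_of_not_stronglyMetricallySubregularAt h
  have hne : ∀ k, x k ≠ xb := fun k hk => by
    have := hxu k
    simp only [hk, sub_self, norm_zero] at this
    exact (this.trans_le' (by positivity)).false
  have hrate : Tendsto (fun k => ‖x k - xb‖⁻¹ * ‖u k - ub‖) atTop (𝓝 0) := by
    refine squeeze_zero (fun k => by positivity) (fun k => ?_)
      tendsto_one_div_add_atTop_nhds_zero_nat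
    have hpos : 0 < ‖x k - xb‖ := norm_pos_iff.2 (sub_ne_zero.2 (hne k))
    rw [inv_mul_le_iff₀ hpos, mul_one_div, le_div_iff₀ (by positivity), mul_comm]
    exact (hxu k).le
  have hxlim : Tendsto x atTop (𝓝 xb) := tendsto_iff_norm_sub_tendsto_zero.2 <|
    squeeze_zero (fun k => norm_nonneg _) (fun k => (hx k).le)
      tendsto_one_div_add_atTop_nhds_zero_nat
  obtain ⟨w, hw0, hw⟩ := exists_ne_zero_zero_mem_graphDerivSV hxlim hne hu hrate
  exact hw0 (hD w hw)

theorem stronglyMetricallySubregularAt_iff_graphDerivSV (hmem : ub ∈ S xb) :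
    StronglyMetricallySubregularAt S xb ub ↔
      {w : En n | (0 : En m) ∈ GraphDerivSV S xb ub w} = {0} := by
  refine ⟨fun h => ?_, fun hD => stronglyMetricallySubregularAt_of_graphDerivSV fun w hw => ?_⟩
  · exact Set.eq_singleton_iff_unique_mem.2
      ⟨zero_mem_graphDerivSV_zero hmem, fun w hw => eq_zero_of_zero_mem_graphDerivSV h hw⟩
  · exact (Set.eq_singleton_iff_unique_mem.1 hD).2 w hw

end GraphicalDerivative

theorem statement_12_general {n m : ℕ} (S : En n → Set (En m)) (xb : En n) (ub : En m)
    (hmem : ub ∈ S xb) :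
    ((∃ κ : ℝ, 0 < κ ∧ ∃ δ : ℝ, 0 < δ ∧ ∀ x : En n, ‖x - xb‖ < δ →
        EMetric.infEdist x {y : En n | ub ∈ S y} ≤
          ENNReal.ofReal κ * EMetric.infEdist ub (S x)) ∧
      (∃ δ : ℝ, 0 < δ ∧ ∀ y : En n, ub ∈ S y → ‖y - xb‖ < δ → y = xb)) ↔
      {w : En n | (0 : En m) ∈ GraphDerivSV S xb ub w} = {0} := by
  rw [← stronglyMetricallySubregularAt_iff_graphDerivSV hmem,
    stronglyMetricallySubregularAt_iff_subregular_and_isolated hmem, ← exists_pos_ofReal_mul_le_iff]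
  simp only [imp.swap (a := ub ∈ S _), exists_pos_forall_norm_sub_lt_iff]
  rfl

/-- a closed-graph set-valued mapping `S` is strongly metrically
subregular at `xb` for `ub` (metric subregularity plus isolatedness of `xb` in
`S⁻¹(ub)`) iff the graphical derivative is nonsingular: `DS(xb|ub)⁻¹(0) = {0}`. -/
theorem statement_12 {n m : ℕ} (S : En n → Set (En m)) (xb : En n) (ub : En m)
    (hgraph : IsClosed {p : En n × En m | p.2 ∈ S p.1}) (hmem : ub ∈ S xb) :
    ((∃ κ : ℝ, 0 < κ ∧ ∃ δ : ℝ, 0 < δ ∧ ∀ x : En n, ‖x - xb‖ < δ →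
        EMetric.infEdist x {y : En n | ub ∈ S y} ≤
          ENNReal.ofReal κ * EMetric.infEdist ub (S x)) ∧
      (∃ δ : ℝ, 0 < δ ∧ ∀ y : En n, ub ∈ S y → ‖y - xb‖ < δ → y = xb)) ↔
      {w : En n | (0 : En m) ∈ GraphDerivSV S xb ub w} = {0} :=
  statement_12_general S xb ub hmem
end
end

section
/- Let f : ℝⁿ → ℝ be twice continuously differentiable in a neighborhood of x̄ with ∇f(x̄) = 0 and ∇²f(x̄) nonsingular, and suppose ∇²f(x̄) is positive definite or indefinite. Then the quantity liminf over x → x̄ with f(x) → f(x̄) and f(x) > f(x̄) of ‖∇f(x)‖ / (2√(f(x) − f(x̄))) equals √(λ_min / 2), where λ_min is the smallest positive eigenvalue of ∇²f(x̄). In particular, f satisfies the Kurdyka–Łojasiewicz inequality ‖∇f(x)‖ ≥ 2μ√(max{f(x)−f(x̄),0}) near x̄ for every μ < √(λ_min/2). -/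
/-!
Write `A` for the Hessian and `u = x - xb`. Taylor's formula gives `∇f x = A u + o(‖u‖)` and
`f x - f xb = ⟪A u, u⟫ / 2 + o(‖u‖²)`. In an eigenbasis of `A`, `λ_min ⟪A u, u⟫ ≤ ‖A u‖²`,
because the negative eigenvalues contribute nonpositively to the left-hand side, and since `A`
is invertible, `‖u‖ = O(‖A u‖)`; so both error terms are absorbed into `‖A u‖²`, and
`‖∇f x‖² ≥ (2 λ_min - o(1)) (f x - f xb)`. This is the KŁ inequality and the lower bound for
the liminf. Along the ray `xb + t • v` through a unit eigenvector for `λ_min`, `‖∇f‖ ~ λ_min t`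
and `f - f xb ~ λ_min t² / 2`, so the ratio tends to `√(λ_min / 2)`.
-/

open Filter Topology

noncomputable section

open Set
open scoped RealInnerProductSpace

theorem LinearMap.exists_pos_mul_norm_le_norm_apply {𝕜 E F : Type*} [NontriviallyNormedField 𝕜]
    [CompleteSpace 𝕜] [NormedAddCommGroup E] [NormedSpace 𝕜 E] [FiniteDimensional 𝕜 E]
    [NormedAddCommGroup F] [NormedSpace 𝕜 F] {T : E →ₗ[𝕜] F} (hT : Function.Injective T) :
    ∃ c > 0, ∀ u, c * ‖u‖ ≤ ‖T u‖ := by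
  obtain ⟨K, hK, hanti⟩ := T.exists_antilipschitzWith (LinearMap.ker_eq_bot.2 hT)
  refine ⟨(K : ℝ)⁻¹, by positivity, fun u => ?_⟩
  rw [inv_mul_le_iff₀ (by positivity)]
  exact ZeroHomClass.bound_of_antilipschitz T hanti u

theorem LinearMap.IsSymmetric.mul_inner_apply_self_le_norm_apply_sq {E : Type*}
    [NormedAddCommGroup E] [InnerProductSpace ℝ E] [FiniteDimensional ℝ E] {T : E →ₗ[ℝ] E}
    (hT : T.IsSymmetric) {m : ℝ} (hm : 0 ≤ m)
    (hmin : ∀ μ, 0 < μ → Module.End.HasEigenvalue T μ → m ≤ μ) (u : E) :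
    m * ⟪T u, u⟫ ≤ ‖T u‖ ^ 2 := by
  set b := hT.eigenvectorBasis rfl
  set lam := hT.eigenvalues rfl
  have hcoord : ∀ i, ⟪T u, b i⟫ = lam i * ⟪u, b i⟫ := fun i => by
    rw [hT, hT.apply_eigenvectorBasis, real_inner_smul_right]; rfl
  have hinner : ⟪T u, u⟫ = ∑ i, lam i * ⟪u, b i⟫ ^ 2 := by
    rw [← b.sum_inner_mul_inner (T u) u]
    exact Finset.sum_congr rfl fun i _ => by rw [hcoord, real_inner_comm u]; ring
  have hnorm : ‖T u‖ ^ 2 = ∑ i, lam i ^ 2 * ⟪u, b i⟫ ^ 2 := by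
    rw [← real_inner_self_eq_norm_sq, ← b.sum_inner_mul_inner (T u) (T u)]
    exact Finset.sum_congr rfl fun i _ => by rw [real_inner_comm (T u) (b i), hcoord]; ring
  rw [hinner, hnorm, Finset.mul_sum]
  refine Finset.sum_le_sum fun i _ => ?_
  rcases le_or_gt (lam i) 0 with hneg | hpos
  · nlinarith [mul_nonneg hm (sq_nonneg ⟪u, b i⟫), sq_nonneg (lam i * ⟪u, b i⟫)]
  · have := hmin _ hpos (hT.hasEigenvalue_eigenvalues rfl i)
    nlinarith [mul_nonneg hpos.le (sq_nonneg ⟪u, b i⟫)]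

theorem two_mul_mul_sqrt_max_le {μ d y : ℝ} (hμ : 0 ≤ μ) (hy : 0 ≤ y)
    (h : 4 * μ ^ 2 * d ≤ y ^ 2) : 2 * μ * √(max d 0) ≤ y := by
  refine (pow_le_pow_iff_left₀ (by positivity) hy two_ne_zero).1 ?_
  rw [mul_pow, Real.sq_sqrt (le_max_right d 0)]
  rcases le_total d 0 with hd | hd
  · rw [max_eq_right hd]; nlinarith [sq_nonneg y]
  · rw [max_eq_left hd]; linarith

section CriticalPoint

variable {E : Type*} [NormedAddCommGroup E] [InnerProductSpace ℝ E]
  {f : E → ℝ} {g : E → E} {xb v : E} {A : E →L[ℝ] E}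

theorem tendsto_add_smul_nhdsGT_zero (xb v : E) :
    Tendsto (fun t : ℝ => xb + t • v) (𝓝[>] 0) (𝓝 xb) :=
  (Continuous.tendsto' (by fun_prop) 0 xb (by simp)).mono_left nhdsWithin_le_nhds

theorem abs_sub_sub_half_inner_le_of_segment [CompleteSpace E] {ε : ℝ} (hε : 0 ≤ ε)
    (hgrad : ∀ t ∈ Icc (0 : ℝ) 1, HasGradientAt f (g (xb + t • v)) (xb + t • v))
    (hbound : ∀ t ∈ Icc (0 : ℝ) 1, ‖g (xb + t • v) - A (t • v)‖ ≤ ε * ‖t • v‖) :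
    |f (xb + v) - f xb - 1 / 2 * ⟪A v, v⟫| ≤ ε * ‖v‖ ^ 2 := by
  set ψ : ℝ → ℝ := fun t => f (xb + t • v) - t ^ 2 / 2 * ⟪A v, v⟫
  have hderiv : ∀ t ∈ Icc (0 : ℝ) 1,
      HasDerivAt ψ ⟪g (xb + t • v) - A (t • v), v⟫ t := fun t ht => by
    have hline : HasDerivAt (fun s : ℝ => xb + s • v) v t := by
      simpa using ((hasDerivAt_id t).smul_const v).const_add xb
    have hf := (hgrad t ht).hasFDerivAt.comp_hasDerivAt t hline
    rw [InnerProductSpace.toDual_apply_apply] at hf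
    have hq : HasDerivAt (fun s : ℝ => s ^ 2 / 2 * ⟪A v, v⟫) (t * ⟪A v, v⟫) t :=
      (((hasDerivAt_pow 2 t).div_const 2).mul_const _).congr_deriv (by norm_num)
    exact (hf.sub hq).congr_deriv (by rw [inner_sub_left, map_smul, real_inner_smul_left])
  have hderiv_le : ∀ t ∈ Ico (0 : ℝ) 1, ‖⟪g (xb + t • v) - A (t • v), v⟫‖ ≤ ε * ‖v‖ ^ 2 := by
    intro t ht
    calc ‖⟪g (xb + t • v) - A (t • v), v⟫‖ ≤ ‖g (xb + t • v) - A (t • v)‖ * ‖v‖ :=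
          norm_inner_le_norm _ _
      _ ≤ ε * ‖t • v‖ * ‖v‖ := by gcongr; exact hbound t (Ico_subset_Icc_self ht)
      _ ≤ ε * ‖v‖ ^ 2 := by
          rw [norm_smul, Real.norm_of_nonneg ht.1]
          nlinarith [mul_nonneg hε (mul_nonneg (sub_nonneg.2 ht.2.le) (sq_nonneg ‖v‖))]
  have := norm_image_sub_le_of_norm_deriv_le_segment_01'
    (fun t ht => (hderiv t ht).hasDerivWithinAt) hderiv_le
  simp only [ψ, one_smul, zero_smul, add_zero, Real.norm_eq_abs] at this
  convert this using 2
  ring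

theorem isLittleO_sub_sub_half_inner [CompleteSpace E] {U : Set E} (hU : U ∈ 𝓝 xb)
    (hgrad : ∀ x ∈ U, HasGradientAt f (g x) x) (hg0 : g xb = 0) (hA : HasFDerivAt g A xb) :
    (fun x => f x - f xb - 1 / 2 * ⟪A (x - xb), x - xb⟫) =o[𝓝 xb] fun x => ‖x - xb‖ ^ 2 := by
  refine Asymptotics.IsLittleO.of_bound fun ε hε => ?_
  have hlin : ∀ᶠ y in 𝓝 xb, ‖g y - A (y - xb)‖ ≤ ε * ‖y - xb‖ := by
    simpa [hg0] using hA.isLittleO.def hε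
  obtain ⟨δ, hδ, hball⟩ := Metric.mem_nhds_iff.1 (inter_mem hlin hU)
  filter_upwards [Metric.ball_mem_nhds xb hδ] with x hx
  have hseg : ∀ t ∈ Icc (0 : ℝ) 1, xb + t • (x - xb) ∈ U ∧
      ‖g (xb + t • (x - xb)) - A (t • (x - xb))‖ ≤ ε * ‖t • (x - xb)‖ := fun t ht => by
    have := hball ((convex_ball xb δ).add_smul_sub_mem (Metric.mem_ball_self hδ) hx ht)
    simpa using this.symm
  simpa using abs_sub_sub_half_inner_le_of_segment hε.le (fun t ht => hgrad _ (hseg t ht).1)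
    fun t ht => (hseg t ht).2

theorem eventually_four_mul_sq_mul_sub_le_norm_sq [CompleteSpace E] {U : Set E} (hU : U ∈ 𝓝 xb)
    (hgrad : ∀ x ∈ U, HasGradientAt f (g x) x) (hg0 : g xb = 0) (hA : HasFDerivAt g A xb)
    {c lam μ : ℝ} (hc : 0 < c) (hcA : ∀ u, c * ‖u‖ ≤ ‖A u‖) (hlam : 0 < lam)
    (hspec : ∀ u, lam * ⟪A u, u⟫ ≤ ‖A u‖ ^ 2) (hμ : 2 * μ ^ 2 < lam) :
    ∀ᶠ x in 𝓝 xb, 4 * μ ^ 2 * (f x - f xb) ≤ ‖g x‖ ^ 2 := by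
  set κ := 2 * μ ^ 2 / lam
  have hκ : κ < 1 := (div_lt_one hlam).2 hμ
  have hκ0 : 0 ≤ κ := by positivity
  -- `ε` is chosen so that `κ + ε * (4 μ² / c² + 2 / c) = 1`: with `‖u‖ ≤ ‖A u‖ / c`, the two
  -- Taylor remainders then cost exactly the slack `1 - κ` in units of `‖A u‖²`.
  set ε := c ^ 2 * (1 - κ) / (4 * μ ^ 2 + 2 * c)
  have hε : 0 < ε := div_pos (mul_pos (pow_pos hc 2) (sub_pos.2 hκ)) (by positivity)
  have hεc : ε * (4 * μ ^ 2 + 2 * c) = c ^ 2 * (1 - κ) := div_mul_cancel₀ _ (by positivity)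
  have hε_le : 2 * ε ≤ c := le_of_mul_le_mul_left
    (by nlinarith [mul_nonneg hε.le (sq_nonneg μ), mul_nonneg (sq_nonneg c) hκ0]) hc
  have hgrad_lin : ∀ᶠ x in 𝓝 xb, ‖g x - A (x - xb)‖ ≤ ε * ‖x - xb‖ := by
    simpa [hg0] using hA.isLittleO.def hε
  filter_upwards [hgrad_lin, (isLittleO_sub_sub_half_inner hU hgrad hg0 hA).def hε]
    with x hgx hfx
  set u := x - xb
  set a := ‖A u‖
  set s := ‖u‖
  have hs : c * s ≤ a := hcA u
  have ha0 : 0 ≤ a := norm_nonneg (A u)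
  have hf_le : f x - f xb ≤ a ^ 2 / (2 * lam) + ε * s ^ 2 := by
    have h1 := (abs_le.1 (by simpa using hfx)).2
    have h2 : 1 / 2 * ⟪A u, u⟫ ≤ a ^ 2 / (2 * lam) := by
      rw [le_div_iff₀ (by positivity)]; nlinarith [hspec u]
    linarith
  have hg_ge : a - ε * s ≤ ‖g x‖ := by
    have := norm_sub_norm_le (A u) (g x)
    rw [norm_sub_rev] at this
    linarith
  have hεs : ε * s ≤ a := by nlinarith
  have hquad : 4 * μ ^ 2 * (a ^ 2 / (2 * lam) + ε * s ^ 2) ≤ (a - ε * s) ^ 2 := by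
    have hκa : 4 * μ ^ 2 * (a ^ 2 / (2 * lam)) = κ * a ^ 2 := by
      simp only [κ]; field_simp; ring
    rw [mul_add, hκa]
    refine le_of_mul_le_mul_left ?_ (pow_pos hc 2)
    have hs2 : (c * s) * (c * s) ≤ a * a := mul_le_mul hs hs (by positivity) ha0
    nlinarith [mul_nonneg (mul_nonneg hε.le hc.le) (mul_nonneg ha0 (sub_nonneg.2 hs)),
      mul_nonneg (mul_nonneg (sq_nonneg μ) hε.le) (sub_nonneg.2 hs2), sq_nonneg (c * ε * s)]
  calc 4 * μ ^ 2 * (f x - f xb) ≤ 4 * μ ^ 2 * (a ^ 2 / (2 * lam) + ε * s ^ 2) := by gcongr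
    _ ≤ (a - ε * s) ^ 2 := hquad
    _ ≤ ‖g x‖ ^ 2 := pow_le_pow_left₀ (sub_nonneg.2 hεs) hg_ge 2

theorem tendsto_norm_div_along_eigenvector (hA : HasFDerivAt g A xb) (hg0 : g xb = 0)
    {lam : ℝ} (hlam : 0 ≤ lam) (hv : ‖v‖ = 1) (hAv : A v = lam • v) :
    Tendsto (fun t : ℝ => ‖g (xb + t • v)‖ / t) (𝓝[>] 0) (𝓝 lam) := by
  have hline : HasDerivAt (fun t : ℝ => xb + t • v) v 0 := by
    simpa using ((hasDerivAt_id (0 : ℝ)).smul_const v).const_add xb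
  have hslope := (hA.comp_hasDerivAt_of_eq 0 hline (by simp)).tendsto_slope_zero_right.norm
  rw [hAv, norm_smul, hv, mul_one, Real.norm_of_nonneg hlam] at hslope
  refine hslope.congr' (eventually_nhdsWithin_of_forall fun t (ht : 0 < t) => ?_)
  simp [hg0, norm_smul, abs_of_pos ht, div_eq_inv_mul]

theorem tendsto_sub_div_sq_along_eigenvector
    (htaylor : (fun x => f x - f xb - 1 / 2 * ⟪A (x - xb), x - xb⟫) =o[𝓝 xb]
      fun x => ‖x - xb‖ ^ 2)
    {lam : ℝ} (hv : ‖v‖ = 1) (hAv : A v = lam • v) :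
    Tendsto (fun t : ℝ => (f (xb + t • v) - f xb) / t ^ 2) (𝓝[>] 0) (𝓝 (lam / 2)) := by
  have hrem := (htaylor.comp_tendsto (tendsto_add_smul_nhdsGT_zero xb v)).tendsto_div_nhds_zero
  rw [← zero_add (lam / 2)]
  refine (hrem.add_const (lam / 2)).congr'
    (eventually_nhdsWithin_of_forall fun t (ht : 0 < t) => ?_)
  simp only [Function.comp_apply, add_sub_cancel_left, map_smul, hAv, norm_smul, hv,
    real_inner_smul_left, real_inner_smul_right, real_inner_self_eq_norm_sq, Real.norm_eq_abs,
    mul_one, sq_abs]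
  field_simp
  ring

theorem tendsto_along_eigenvector [CompleteSpace E] {U : Set E} (hU : U ∈ 𝓝 xb)
    (hgrad : ∀ x ∈ U, HasGradientAt f (g x) x) (hg0 : g xb = 0) (hA : HasFDerivAt g A xb)
    {lam : ℝ} (hlam : 0 < lam) (hv : ‖v‖ = 1) (hAv : A v = lam • v) :
    Tendsto (fun t : ℝ => xb + t • v) (𝓝[>] 0)
        ((𝓝 xb ⊓ comap f (𝓝 (f xb))) ⊓ 𝓟 {x | f xb < f x}) ∧
      Tendsto (fun t : ℝ => ‖g (xb + t • v)‖ / (2 * √(f (xb + t • v) - f xb))) (𝓝[>] 0)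
        (𝓝 √(lam / 2)) := by
  have hpath := tendsto_add_smul_nhdsGT_zero xb v
  have hf := tendsto_sub_div_sq_along_eigenvector
    (isLittleO_sub_sub_half_inner hU hgrad hg0 hA) hv hAv
  have hg := tendsto_norm_div_along_eigenvector hA hg0 hlam.le hv hAv
  have hfpos : ∀ᶠ t in 𝓝[>] (0 : ℝ), f xb < f (xb + t • v) := by
    filter_upwards [hf.eventually (eventually_gt_nhds (half_pos hlam)), self_mem_nhdsWithin]
      with t ht (ht0 : 0 < t)
    exact sub_pos.1 ((div_pos_iff_of_pos_right (by positivity)).1 ht)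
  have hfcont : ContinuousAt f xb :=
    (hgrad xb (mem_of_mem_nhds hU)).differentiableAt.continuousAt
  refine ⟨tendsto_inf.2 ⟨tendsto_inf.2 ⟨hpath, tendsto_comap_iff.2 (hfcont.tendsto.comp hpath)⟩,
    tendsto_principal.2 hfpos⟩, ?_⟩
  have hlim : lam / (2 * √(lam / 2)) = √(lam / 2) := by
    rw [div_eq_iff (by positivity), mul_left_comm, Real.mul_self_sqrt (by positivity)]
    ring
  have hratio := hg.div (hf.sqrt.const_mul 2) (by positivity)
  rw [hlim] at hratio
  refine hratio.congr' (eventually_nhdsWithin_of_forall fun t (ht : 0 < t) => ?_)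
  simp only [Pi.div_apply]
  rw [Real.sqrt_div' _ (sq_nonneg t), Real.sqrt_sq ht.le, mul_div_assoc',
    div_div_div_cancel_right₀ ht.ne']

theorem eventually_le_norm_div_sqrt [CompleteSpace E] {U : Set E} (hU : U ∈ 𝓝 xb)
    (hgrad : ∀ x ∈ U, HasGradientAt f (g x) x) (hg0 : g xb = 0) (hA : HasFDerivAt g A xb)
    {c lam μ : ℝ} (hc : 0 < c) (hcA : ∀ u, c * ‖u‖ ≤ ‖A u‖) (hlam : 0 < lam)
    (hspec : ∀ u, lam * ⟪A u, u⟫ ≤ ‖A u‖ ^ 2) (hμ : μ < √(lam / 2)) :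
    ∀ᶠ x in (𝓝 xb ⊓ comap f (𝓝 (f xb))) ⊓ 𝓟 {x | f xb < f x},
      μ ≤ ‖g x‖ / (2 * √(f x - f xb)) := by
  rcases le_or_gt μ 0 with hμ0 | hμ0
  · exact Eventually.of_forall fun x => hμ0.trans (by positivity)
  have hμ2 : 2 * μ ^ 2 < lam := by
    have := (Real.lt_sqrt hμ0.le).1 hμ
    linarith
  have hkl := eventually_four_mul_sq_mul_sub_le_norm_sq hU hgrad hg0 hA hc hcA hlam hspec hμ2
  filter_upwards [hkl.filter_mono (inf_le_left.trans inf_le_left),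
    mem_inf_of_right (mem_principal_self _)] with x hx (hfx : f xb < f x)
  have hd : 0 < f x - f xb := sub_pos.2 hfx
  rw [le_div_iff₀ (by positivity), ← mul_assoc, mul_comm μ 2]
  simpa [max_eq_left hd.le] using two_mul_mul_sqrt_max_le hμ0.le (norm_nonneg _) hx

end CriticalPoint

theorem Filter.liminf_eq_of_eventually_le_of_tendsto_comp {α β : Type*} {F : Filter α}
    {r : α → ℝ} {L : ℝ} (hlow : ∀ μ < L, ∀ᶠ x in F, μ ≤ r x) {l : Filter β} [l.NeBot]
    {p : β → α} (hp : Tendsto p l F) (hr : Tendsto (r ∘ p) l (𝓝 L)) : liminf r F = L := by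
  have hfreq : ∀ μ > L, ∃ᶠ x in F, r x ≤ μ := fun μ hμ =>
    hp.frequently (hr.eventually (eventually_le_nhds hμ)).frequently
  have hbdd : IsBoundedUnder (· ≥ ·) F r := ⟨L - 1, hlow _ (sub_one_lt L)⟩
  have hcobdd : IsCoboundedUnder (· ≥ ·) F r :=
    IsCoboundedUnder.of_frequently_le (hfreq _ (lt_add_one L))
  exact le_antisymm
    (le_of_forall_gt_imp_ge_of_dense fun μ hμ => liminf_le_of_frequently_le (hfreq μ hμ) hbdd)
    (le_of_forall_lt_imp_le_of_dense fun μ hμ => le_liminf_of_le hcobdd (hlow μ hμ))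

theorem statement_13_general {n : ℕ} (f : En n → ℝ) (g : En n → En n) (xb : En n)
    (U : Set (En n)) (hU : U ∈ nhds xb)
    (hgrad : ∀ x ∈ U, HasGradientAt f (g x) x) (hg0 : g xb = 0)
    (H : Matrix (Fin n) (Fin n) ℝ) (hsymm : H.IsSymm)
    (hhess : HasFDerivAt g (Matrix.toEuclideanCLM (𝕜 := ℝ) H : En n →L[ℝ] En n) xb)
    (hdet : H.det ≠ 0)
    (lammin : ℝ) (hlam0 : 0 < lammin)
    (heig : ∃ v : En n, v ≠ 0 ∧ (Matrix.toEuclideanCLM (𝕜 := ℝ) H) v = lammin • v)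
    (hmin : ∀ μ : ℝ, 0 < μ → (∃ v : En n, v ≠ 0 ∧
        (Matrix.toEuclideanCLM (𝕜 := ℝ) H) v = μ • v) → lammin ≤ μ) :
    Filter.liminf (fun x : En n => ‖g x‖ / (2 * Real.sqrt (f x - f xb)))
        ((nhds xb ⊓ Filter.comap f (nhds (f xb))) ⊓
          Filter.principal {x : En n | f xb < f x}) = Real.sqrt (lammin / 2) ∧
      ∀ μ : ℝ, 0 < μ → μ < Real.sqrt (lammin / 2) →
        ∃ ε : ℝ, 0 < ε ∧ ∃ ν : ℝ, 0 < ν ∧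
          ∀ x : En n, ‖x - xb‖ ≤ ε → f x < f xb + ν →
            2 * μ * Real.sqrt (max (f x - f xb) 0) ≤ ‖g x‖ := by
  set A : En n →L[ℝ] En n := Matrix.toEuclideanCLM (𝕜 := ℝ) H
  have hAsymm : (A : En n →ₗ[ℝ] En n).IsSymmetric := by
    rwa [Matrix.coe_toEuclideanCLM_eq_toEuclideanLin, Matrix.isSymmetric_toEuclideanLin_iff]
  have hAinj : Function.Injective A :=
    (WithLp.toLp_injective 2).comp <| (Matrix.mulVec_injective_iff_isUnit.2
      ((Matrix.isUnit_iff_isUnit_det H).2 hdet.isUnit)).comp (WithLp.ofLp_injective 2)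
  obtain ⟨c, hc, hcA⟩ :=
    LinearMap.exists_pos_mul_norm_le_norm_apply (T := (A : En n →ₗ[ℝ] En n)) hAinj
  have hspec := hAsymm.mul_inner_apply_self_le_norm_apply_sq hlam0.le fun μ hμ hev => by
    obtain ⟨v, hv⟩ := hev.exists_hasEigenvector
    exact hmin μ hμ ⟨v, hv.2, Module.End.mem_eigenspace_iff.1 hv.1⟩
  obtain ⟨v, hv0, hAv⟩ := heig
  obtain ⟨hpath, hratio⟩ := tendsto_along_eigenvector hU hgrad hg0 hhess hlam0
    (norm_smul_inv_norm (𝕜 := ℝ) hv0) (by rw [map_smul, hAv, smul_comm])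
  refine ⟨liminf_eq_of_eventually_le_of_tendsto_comp (fun μ hμ => eventually_le_norm_div_sqrt
    hU hgrad hg0 hhess hc hcA hlam0 hspec hμ) hpath hratio, fun μ hμ0 hμ => ?_⟩
  have hμ2 : 2 * μ ^ 2 < lammin := by nlinarith [(Real.lt_sqrt hμ0.le).1 hμ]
  obtain ⟨ε, hε, hball⟩ := Metric.eventually_nhds_iff_ball.1
    (eventually_four_mul_sq_mul_sub_le_norm_sq hU hgrad hg0 hhess hc hcA hlam0 hspec hμ2)
  refine ⟨ε / 2, half_pos hε, 1, one_pos, fun x hx _ =>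
    two_mul_mul_sqrt_max_le hμ0.le (norm_nonneg _) (hball x ?_)⟩
  rw [Metric.mem_ball, dist_eq_norm]
  linarith

/-- for a `C²` function with `∇f(xb) = 0` and nonsingular Hessian
`H` that is positive definite or indefinite, the KŁ modulus with exponent `1/2`,
i.e. the liminf of `‖∇f(x)‖ / (2√(f(x) − f(xb)))` over `x → xb` with
`f(x) → f(xb)` and `f(x) > f(xb)`, equals `√(λ_min/2)` where `λ_min` is the
smallest positive eigenvalue of `H`; in particular the KŁ inequality with
exponent `1/2` holds for every modulus `μ < √(λ_min/2)`. -/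
theorem statement_13 {n : ℕ} (f : En n → ℝ) (g : En n → En n) (xb : En n)
    (U : Set (En n)) (hU : U ∈ nhds xb) (hf : ContDiffOn ℝ 2 f U)
    (hgrad : ∀ x ∈ U, HasGradientAt f (g x) x) (hg0 : g xb = 0)
    (H : Matrix (Fin n) (Fin n) ℝ) (hsymm : H.IsSymm)
    (hhess : HasFDerivAt g (Matrix.toEuclideanCLM (𝕜 := ℝ) H : En n →L[ℝ] En n) xb)
    (hdet : H.det ≠ 0)
    (hposind : ∃ v : En n, 0 < (inner ℝ ((Matrix.toEuclideanCLM (𝕜 := ℝ) H) v) v : ℝ))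
    (lammin : ℝ) (hlam0 : 0 < lammin)
    (heig : ∃ v : En n, v ≠ 0 ∧ (Matrix.toEuclideanCLM (𝕜 := ℝ) H) v = lammin • v)
    (hmin : ∀ μ : ℝ, 0 < μ → (∃ v : En n, v ≠ 0 ∧
        (Matrix.toEuclideanCLM (𝕜 := ℝ) H) v = μ • v) → lammin ≤ μ) :
    Filter.liminf (fun x : En n => ‖g x‖ / (2 * Real.sqrt (f x - f xb)))
        ((nhds xb ⊓ Filter.comap f (nhds (f xb))) ⊓
          Filter.principal {x : En n | f xb < f x}) = Real.sqrt (lammin / 2) ∧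
      ∀ μ : ℝ, 0 < μ → μ < Real.sqrt (lammin / 2) →
        ∃ ε : ℝ, 0 < ε ∧ ∃ ν : ℝ, 0 < ν ∧
          ∀ x : En n, ‖x - xb‖ ≤ ε → f x < f xb + ν →
            2 * μ * Real.sqrt (max (f x - f xb) 0) ≤ ‖g x‖ :=
  statement_13_general f g xb U hU hgrad hg0 H hsymm hhess hdet lammin hlam0 heig hmin
end
end

section
/- For an n×n real symmetric matrix H that has at least one positive eigenvalue, the infimum of ‖Hw‖² / (2 wᵀHw) over all w with wᵀHw > 0 equals λ_min/2, where λ_min is the smallest positive eigenvalue of H; moreover, the infimum is attained. -/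
/-!
In coordinates `x` with respect to an orthonormal eigenbasis of `H` (eigenvalues `μ i`),
`⟪Hw, w⟫ = ∑ μ i * x i ^ 2` and `‖Hw‖² = ∑ (μ i * x i) ^ 2`. Termwise
`λ_min * μ i * x i ^ 2 ≤ μ i ^ 2 * x i ^ 2`: for `μ i ≤ 0` the left side is nonpositive, and for
`μ i > 0` we have `λ_min ≤ μ i`. Hence `λ_min * ⟪Hw, w⟫ ≤ ‖Hw‖²`, and an eigenvector for `λ_min`
gives equality.
-/

open Filter Topology

noncomputable section

namespace LinearMap.IsSymmetric

open Module.End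

variable {E : Type*} [NormedAddCommGroup E] [InnerProductSpace ℝ E] [FiniteDimensional ℝ E]
  {T : E →ₗ[ℝ] E} {n : ℕ}

theorem inner_apply_self_eq_sum_eigenvalues (hT : T.IsSymmetric)
    (hn : Module.finrank ℝ E = n) (w : E) :
    inner ℝ (T w) w =
      ∑ i, hT.eigenvalues hn i * (hT.eigenvectorBasis hn).repr w i ^ 2 := by
  rw [← (hT.eigenvectorBasis hn).repr.inner_map_map, PiLp.inner_apply]
  refine Finset.sum_congr rfl fun i _ => ?_
  simp only [eigenvectorBasis_apply_self_apply, RCLike.ofReal_real_eq_id, id_eq, RCLike.inner_apply,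
    conj_trivial]
  ring

theorem norm_apply_sq_eq_sum_eigenvalues (hT : T.IsSymmetric)
    (hn : Module.finrank ℝ E = n) (w : E) :
    ‖T w‖ ^ 2 =
      ∑ i, (hT.eigenvalues hn i * (hT.eigenvectorBasis hn).repr w i) ^ 2 := by
  rw [← (hT.eigenvectorBasis hn).repr.norm_map, EuclideanSpace.real_norm_sq_eq]
  simp only [eigenvectorBasis_apply_self_apply, RCLike.ofReal_real_eq_id, id_eq]

theorem mul_inner_apply_self_le_norm_apply_sq_s15 (hT : T.IsSymmetric) {c : ℝ} (hc : 0 ≤ c)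
    (hle : ∀ μ, 0 < μ → HasEigenvalue T μ → c ≤ μ) (w : E) :
    c * inner ℝ (T w) w ≤ ‖T w‖ ^ 2 := by
  rw [hT.inner_apply_self_eq_sum_eigenvalues rfl, hT.norm_apply_sq_eq_sum_eigenvalues rfl,
    Finset.mul_sum]
  refine Finset.sum_le_sum fun i _ => ?_
  set μ := hT.eigenvalues rfl i
  set x := (hT.eigenvectorBasis rfl).repr w i
  rcases le_or_gt μ 0 with hμ | hμ
  · nlinarith [sq_nonneg x, mul_nonpos_of_nonpos_of_nonneg hμ (sq_nonneg x)]
  · nlinarith [hle μ hμ (hT.hasEigenvalue_eigenvalues rfl i), mul_nonneg hμ.le (sq_nonneg x)]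

end LinearMap.IsSymmetric

theorem norm_smul_sq_div_two_mul_inner_smul_self {E : Type*} [NormedAddCommGroup E]
    [InnerProductSpace ℝ E] {μ : ℝ} (hμ : μ ≠ 0) {v : E} (hv : v ≠ 0) :
    ‖μ • v‖ ^ 2 / (2 * inner ℝ (μ • v) v) = μ / 2 := by
  have : ‖v‖ ≠ 0 := norm_ne_zero_iff.mpr hv
  rw [norm_smul, real_inner_smul_left, real_inner_self_eq_norm_sq, mul_pow, Real.norm_eq_abs,
    sq_abs]
  field_simp

/-- for a real symmetric matrix `H` with smallest positive
eigenvalue `λ_min`, the infimum of `‖Hw‖²/(2 wᵀHw)` over `{w : wᵀHw > 0}`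
equals `λ_min/2` and is attained. -/
theorem statement_15 {n : ℕ} (H : Matrix (Fin n) (Fin n) ℝ) (hsymm : H.IsSymm)
    (lammin : ℝ) (hlam0 : 0 < lammin)
    (heig : ∃ v : En n, v ≠ 0 ∧ (Matrix.toEuclideanCLM (𝕜 := ℝ) H) v = lammin • v)
    (hmin : ∀ μ : ℝ, 0 < μ → (∃ v : En n, v ≠ 0 ∧
        (Matrix.toEuclideanCLM (𝕜 := ℝ) H) v = μ • v) → lammin ≤ μ) :
    IsLeast {r : ℝ | ∃ w : En n,
        0 < (inner ℝ ((Matrix.toEuclideanCLM (𝕜 := ℝ) H) w) w : ℝ) ∧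
        r = ‖(Matrix.toEuclideanCLM (𝕜 := ℝ) H) w‖ ^ 2 /
          (2 * (inner ℝ ((Matrix.toEuclideanCLM (𝕜 := ℝ) H) w) w : ℝ))}
      (lammin / 2) := by
  have hT : (Matrix.toEuclideanCLM (𝕜 := ℝ) H : En n →ₗ[ℝ] En n).IsSymmetric := by
    rw [Matrix.coe_toEuclideanCLM_eq_toEuclideanLin, Matrix.isSymmetric_toEuclideanLin_iff]
    exact Matrix.isHermitian_iff_isSymm.mpr hsymm
  obtain ⟨v, hv, hHv⟩ := heig
  refine ⟨⟨v, ?_, ?_⟩, ?_⟩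
  · rw [hHv, real_inner_smul_left, real_inner_self_eq_norm_sq]
    have : 0 < ‖v‖ := norm_pos_iff.mpr hv
    positivity
  · rw [hHv, norm_smul_sq_div_two_mul_inner_smul_self hlam0.ne' hv]
  · rintro r ⟨w, hw, rfl⟩
    have key := hT.mul_inner_apply_self_le_norm_apply_sq_s15 hlam0.le (fun μ hμ hμT => by
      obtain ⟨u, hu⟩ := hμT.exists_hasEigenvector
      exact hmin μ hμ ⟨u, hu.2, hu.apply_eq_smul⟩) w
    rw [ContinuousLinearMap.coe_coe] at key
    rw [le_div_iff₀ (by positivity)]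
    linarith
end
end

section
/- Define f : ℝ → ℝ by f(0) = 0, f(x) = x² + 1/4 for |x| > 1/2, and f(x) = x² + 1/n − 1/n² for 1/n < |x| ≤ 1/(n−1), n = 3, 4, …. Then f is continuous at 0, satisfies the quadratic growth condition at 0 (f(x) ≥ f(0) + (1/2)x² near 0), but f does not satisfy the Kurdyka–Łojasiewicz property at 0 with any exponent θ ∈ [0,1): for z_k = 1/(k−1), one has 2z_k ∈ ∂f(z_k) and (1−θ)·2z_k / (f(z_k) − f(0))^θ → 0 as k → ∞ for every θ ∈ [0,1). -/
open Filter Topology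
open scoped ENNReal

noncomputable section

/-- Regular subgradients of `f : ℝ → ℝ`. -/
def RegSubgrad1 (f : ℝ → ℝ) (x : ℝ) : Set ℝ :=
  {v | ∀ ε : ℝ, 0 < ε → ∃ δ : ℝ, 0 < δ ∧ ∀ u : ℝ, |u - x| < δ → u ≠ x →
      f x + v * (u - x) - ε * |u - x| ≤ f u}

/-- Limiting subgradients of `f : ℝ → ℝ`. -/
def LimSubgrad1 (f : ℝ → ℝ) (x : ℝ) : Set ℝ :=
  {v | ∃ xk vk : ℕ → ℝ,
      Tendsto xk atTop (nhds x) ∧ Tendsto vk atTop (nhds v) ∧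
      Tendsto (fun k => f (xk k)) atTop (nhds (f x)) ∧
      ∀ k, vk k ∈ RegSubgrad1 f (xk k)}


/- Away from `0` the function is `x² + φ(ℓ(x))` with `φ(t) = t - t²` and a piecewise constant
`ℓ(x) < |x|` (`klCounterexample.level`) that steps down to `1/k` just below `x = 1/(k-1)`.
Since `φ(ℓ) ≥ 0`, `f` has quadratic growth, and `ℓ(x) < |x|` gives continuity at `0`.
At `z = 1/(k-1)` the quadratic `u² + φ(1/k)` touches `f` from below on `(1/k, ∞)`, so its slope
`2z` is a regular subgradient. But `f(z) ≥ z/4`, so the KŁ ratio `(1-θ)·2z / f(z)^θ ≲ z^(1-θ)`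
tends to `0`, which no KŁ inequality allows. -/

/-- The KŁ inequality with desingularizing function `s ↦ μ s^(1-θ)`. -/
def HasKLPropertyAt (f : ℝ → ℝ) (x₀ θ : ℝ) : Prop :=
  ∃ μ : ℝ, 0 < μ ∧ ∃ ε : ℝ, 0 < ε ∧ ∃ ν : ℝ, 0 < ν ∧
    ∀ x : ℝ, |x - x₀| ≤ ε → f x₀ < f x → f x < f x₀ + ν →
      ENNReal.ofReal ((μ / (1 - θ)) * (f x - f x₀) ^ θ) ≤
        Metric.infEDist 0 (LimSubgrad1 f x)

theorem mem_regSubgrad1_of_hasDerivAt_of_eventually_le {f h : ℝ → ℝ} {x v : ℝ}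
    (hh : HasDerivAt h v x) (hx : h x = f x) (hle : ∀ᶠ u in 𝓝 x, h u ≤ f u) :
    v ∈ RegSubgrad1 f x := by
  intro ε hε
  have hlin : ∀ᶠ u in 𝓝 x, |h u - h x - v * (u - x)| ≤ ε * |u - x| := by
    simpa [Real.norm_eq_abs, smul_eq_mul, mul_comm v] using
      (hasDerivAt_iff_isLittleO.mp hh).def hε
  obtain ⟨δ, hδ, hδu⟩ := Metric.eventually_nhds_iff.mp (hlin.and hle)
  refine ⟨δ, hδ, fun u hu _ => ?_⟩
  obtain ⟨hlin_u, hle_u⟩ := hδu (by rwa [Real.dist_eq])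
  linarith [neg_abs_le (h u - h x - v * (u - x))]

theorem regSubgrad1_subset_limSubgrad1 (f : ℝ → ℝ) (x : ℝ) :
    RegSubgrad1 f x ⊆ LimSubgrad1 f x := fun v hv =>
  ⟨fun _ => x, fun _ => v, tendsto_const_nhds, tendsto_const_nhds, tendsto_const_nhds, fun _ => hv⟩

theorem not_hasKLPropertyAt_of_tendsto {f : ℝ → ℝ} {x₀ θ : ℝ} {x v : ℕ → ℝ}
    (hθ : θ < 1) (hx : Tendsto x atTop (𝓝 x₀)) (hfx : Tendsto (f ∘ x) atTop (𝓝 (f x₀)))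
    (hpos : ∀ᶠ k in atTop, f x₀ < f (x k)) (hv : ∀ᶠ k in atTop, v k ∈ LimSubgrad1 f (x k))
    (hratio : Tendsto (fun k => (1 - θ) * |v k| / (f (x k) - f x₀) ^ θ) atTop (𝓝 0)) :
    ¬ HasKLPropertyAt f x₀ θ := by
  rintro ⟨μ, hμ, ε, hε, ν, hν, hKL⟩
  have hnear : ∀ᶠ k in atTop, |x k - x₀| ≤ ε := by
    simpa only [← Real.dist_eq] using (hx.eventually (Metric.closedBall_mem_nhds x₀ hε))
  have hbelow : ∀ᶠ k in atTop, f (x k) < f x₀ + ν :=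
    hfx.eventually (gt_mem_nhds (lt_add_of_pos_right _ hν))
  obtain ⟨k, hk_near, hk_pos, hk_below, hk_mem, hk_ratio⟩ :=
    (hnear.and (hpos.and (hbelow.and (hv.and (hratio.eventually_lt_const hμ))))).exists
  have hgap : 0 < (f (x k) - f x₀) ^ θ := Real.rpow_pos_of_pos (sub_pos.mpr hk_pos) θ
  have hdist : Metric.infEDist 0 (LimSubgrad1 f (x k)) ≤ ENNReal.ofReal |v k| := by
    simpa [edist_dist, Real.dist_eq] using
      Metric.infEDist_le_edist_of_mem (x := (0 : ℝ)) hk_mem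
  have hKL_k : μ / (1 - θ) * (f (x k) - f x₀) ^ θ ≤ |v k| :=
    (ENNReal.ofReal_le_ofReal_iff (abs_nonneg _)).mp
      ((hKL (x k) hk_near hk_pos hk_below).trans hdist)
  rw [div_lt_iff₀ hgap] at hk_ratio
  rw [div_mul_eq_mul_div, div_le_iff₀ (sub_pos.mpr hθ)] at hKL_k
  linarith

theorem tendsto_div_rpow_of_mul_le {α : Type*} {l : Filter α} {x y : α → ℝ} {c θ : ℝ}
    (hc : 0 < c) (hθ0 : 0 ≤ θ) (hθ1 : θ < 1) (hx : Tendsto x l (𝓝 0))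
    (hxpos : ∀ᶠ a in l, 0 < x a) (hxy : ∀ᶠ a in l, c * x a ≤ y a) :
    Tendsto (fun a => x a / y a ^ θ) l (𝓝 0) := by
  have hbound : Tendsto (fun a => x a ^ (1 - θ) / c ^ θ) l (𝓝 0) := by
    simpa [Real.zero_rpow (sub_pos.mpr hθ1).ne'] using
      (hx.rpow_const (Or.inr (sub_pos.mpr hθ1).le)).div_const (c ^ θ)
  refine tendsto_of_tendsto_of_tendsto_of_le_of_le' tendsto_const_nhds hbound ?_ ?_
  · filter_upwards [hxpos, hxy] with a hxa hya
    have : 0 < y a := (mul_pos hc hxa).trans_le hya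
    positivity
  · filter_upwards [hxpos, hxy] with a hxa hya
    calc x a / y a ^ θ ≤ x a / (c * x a) ^ θ :=
          div_le_div_of_nonneg_left hxa.le (by positivity)
            (Real.rpow_le_rpow (by positivity) hya hθ0)
      _ = x a ^ (1 - θ) / c ^ θ := by
          rw [Real.mul_rpow hc.le hxa.le, Real.rpow_sub hxa, Real.rpow_one]
          field_simp

theorem tendsto_one_div_natCast_sub_one_nhdsGT :
    Tendsto (fun k : ℕ => 1 / ((k : ℝ) - 1)) atTop (𝓝[>] 0) := by
  refine tendsto_nhdsWithin_iff.mpr ⟨tendsto_const_nhds.div_atTop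
    (tendsto_atTop_add_const_right _ (-1) tendsto_natCast_atTop_atTop), ?_⟩
  filter_upwards [eventually_ge_atTop 2] with k hk
  have : (2 : ℝ) ≤ k := by exact_mod_cast hk
  exact Set.mem_Ioi.mpr (one_div_pos.mpr (by linarith))

/-- The function of the theorem: `f x = x² + 1/n - 1/n²` for `1/n < |x| ≤ 1/(n-1)`, where
`n = ⌊1/|x|⌋ + 1`. -/
def klCounterexample : ℝ → ℝ := fun x => if x = 0 then 0
      else if 1 / 2 < |x| then x ^ 2 + 1 / 4
      else x ^ 2 + 1 / ((⌊|x|⁻¹⌋₊ : ℝ) + 1) - 1 / ((⌊|x|⁻¹⌋₊ : ℝ) + 1) ^ 2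

namespace klCounterexample

def level (x : ℝ) : ℝ := if 1 / 2 < |x| then 1 / 2 else 1 / ((⌊|x|⁻¹⌋₊ : ℝ) + 1)

theorem apply_zero : klCounterexample 0 = 0 := if_pos rfl

theorem eq_sq_add_level {x : ℝ} (hx : x ≠ 0) :
    klCounterexample x = x ^ 2 + (level x - level x ^ 2) := by
  simp only [klCounterexample, level, if_neg hx]
  split_ifs <;> simp only [div_pow, one_pow] <;> ring

theorem level_pos (x : ℝ) : 0 < level x := by
  unfold level; split_ifs <;> positivity

theorem level_le_half {x : ℝ} (hx : x ≠ 0) : level x ≤ 1 / 2 := by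
  unfold level
  split_ifs with h
  · rfl
  · have hinv : (2 : ℝ) ≤ |x|⁻¹ := by
      rw [le_inv_comm₀ two_pos (abs_pos.mpr hx)]
      linarith
    have : (2 : ℝ) ≤ ⌊|x|⁻¹⌋₊ := by exact_mod_cast Nat.le_floor (by exact_mod_cast hinv)
    rw [div_le_div_iff₀ (by positivity) two_pos]
    linarith

theorem level_lt_abs {x : ℝ} (hx : x ≠ 0) : level x < |x| := by
  unfold level
  split_ifs with h
  · exact h
  · rw [div_lt_iff₀ (by positivity), ← inv_mul_lt_iff₀ (abs_pos.mpr hx), mul_one]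
    exact Nat.lt_floor_add_one _

theorem one_div_le_level {n : ℕ} (hn : 2 ≤ n) {x : ℝ} (hx : 1 / n < |x|) : 1 / n ≤ level x := by
  have hn' : (2 : ℝ) ≤ n := by exact_mod_cast hn
  unfold level
  split_ifs with h
  · rw [div_le_div_iff₀ (by positivity) two_pos]
    linarith
  · have hfloor : ⌊|x|⁻¹⌋₊ < n := by
      have : |x|⁻¹ < n := by
        rwa [inv_lt_comm₀ (hx.trans' (by positivity)) (by positivity), ← one_div]
      exact_mod_cast (Nat.floor_le (by positivity)).trans_lt this
    have : ((⌊|x|⁻¹⌋₊ : ℕ) : ℝ) + 1 ≤ n := by exact_mod_cast hfloor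
    exact one_div_le_one_div_of_le (by positivity) this

theorem level_one_div_sub_one {k : ℕ} (hk : 3 ≤ k) : level (1 / ((k : ℝ) - 1)) = 1 / k := by
  have hk' : (3 : ℝ) ≤ k := by exact_mod_cast hk
  have hpos : 0 < 1 / ((k : ℝ) - 1) := by apply div_pos one_pos; linarith
  have hsub : (k : ℝ) - 1 = ((k - 1 : ℕ) : ℝ) := by
    rw [Nat.cast_sub (by omega), Nat.cast_one]
  unfold level
  rw [abs_of_pos hpos, if_neg, ← one_div, one_div_one_div, hsub, Nat.floor_natCast, ← hsub,
    sub_add_cancel]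
  rw [not_lt, div_le_div_iff₀ (by linarith) two_pos]
  linarith

theorem sq_le (x : ℝ) : x ^ 2 ≤ klCounterexample x := by
  rcases eq_or_ne x 0 with rfl | hx
  · simp [apply_zero]
  · rw [eq_sq_add_level hx]
    nlinarith [level_pos x, level_le_half hx]

theorem le_sq_add_abs (x : ℝ) : klCounterexample x ≤ x ^ 2 + |x| := by
  rcases eq_or_ne x 0 with rfl | hx
  · simp [apply_zero]
  · rw [eq_sq_add_level hx]
    nlinarith [level_lt_abs hx]

theorem continuousAt_zero : ContinuousAt klCounterexample 0 := by
  have hcont : Continuous fun x : ℝ => x ^ 2 + |x| := by fun_prop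
  have hbound : Tendsto (fun x : ℝ => x ^ 2 + |x|) (𝓝 0) (𝓝 0) := by
    simpa using hcont.tendsto 0
  rw [ContinuousAt, apply_zero]
  exact squeeze_zero (fun x => (sq_nonneg x).trans (sq_le x)) le_sq_add_abs hbound

/-- Because `t ↦ t - t²` increases on `(-∞, 1/2]` and `1/n ≤ level u ≤ 1/2`. -/
theorem sq_add_le_of_one_div_lt {n : ℕ} (hn : 2 ≤ n) {u : ℝ} (hu : 1 / n < |u|) :
    u ^ 2 + (1 / n - (1 / n) ^ 2) ≤ klCounterexample u := by
  have hu0 : u ≠ 0 := abs_pos.mp (hu.trans' (by positivity))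
  rw [eq_sq_add_level hu0]
  nlinarith [one_div_le_level hn hu, level_le_half hu0]

theorem apply_one_div_sub_one {k : ℕ} (hk : 3 ≤ k) :
    klCounterexample (1 / ((k : ℝ) - 1)) = (1 / ((k : ℝ) - 1)) ^ 2 + (1 / k - (1 / k) ^ 2) := by
  have hk' : (3 : ℝ) ≤ k := by exact_mod_cast hk
  rw [eq_sq_add_level (by apply one_div_ne_zero; linarith), level_one_div_sub_one hk]

theorem two_mul_mem_regSubgrad1 {k : ℕ} (hk : 3 ≤ k) :
    2 * (1 / ((k : ℝ) - 1)) ∈ RegSubgrad1 klCounterexample (1 / ((k : ℝ) - 1)) := by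
  have hk' : (3 : ℝ) ≤ k := by exact_mod_cast hk
  have hz : 1 / (k : ℝ) < 1 / ((k : ℝ) - 1) :=
    one_div_lt_one_div_of_lt (by linarith) (by linarith)
  refine mem_regSubgrad1_of_hasDerivAt_of_eventually_le
    (h := fun u => u ^ 2 + (1 / k - (1 / k) ^ 2)) ?_ (apply_one_div_sub_one hk).symm ?_
  · simpa using (hasDerivAt_pow 2 (1 / ((k : ℝ) - 1))).add_const (1 / (k : ℝ) - (1 / k) ^ 2)
  · filter_upwards [lt_mem_nhds hz] with u hu
    exact sq_add_le_of_one_div_lt (by omega) (hu.trans_le (le_abs_self u))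

theorem quarter_mul_le_apply_one_div_sub_one {k : ℕ} (hk : 3 ≤ k) :
    1 / 4 * (1 / ((k : ℝ) - 1)) ≤ klCounterexample (1 / ((k : ℝ) - 1)) := by
  have hk' : (3 : ℝ) ≤ k := by exact_mod_cast hk
  have hgap : 1 / 4 * (1 / ((k : ℝ) - 1)) ≤ 1 / k - (1 / k) ^ 2 := by
    have hk1 : (0 : ℝ) < k - 1 := by linarith
    field_simp
    nlinarith
  rw [apply_one_div_sub_one hk]
  nlinarith

theorem tendsto_ratio_one_div_sub_one {θ : ℝ} (hθ0 : 0 ≤ θ) (hθ1 : θ < 1) :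
    Tendsto (fun k : ℕ => (1 - θ) * (2 * (1 / ((k : ℝ) - 1))) /
      (klCounterexample (1 / ((k : ℝ) - 1)) - klCounterexample 0) ^ θ) atTop (𝓝 0) := by
  obtain ⟨hz, hz_pos⟩ := tendsto_nhdsWithin_iff.mp tendsto_one_div_natCast_sub_one_nhdsGT
  have hlower : ∀ᶠ k : ℕ in atTop, 1 / 4 * (1 / ((k : ℝ) - 1)) ≤
      klCounterexample (1 / ((k : ℝ) - 1)) - klCounterexample 0 := by
    filter_upwards [eventually_ge_atTop 3] with k hk
    rw [apply_zero, sub_zero]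
    exact quarter_mul_le_apply_one_div_sub_one hk
  simpa only [mul_zero, mul_div_assoc, mul_assoc, mul_left_comm] using
    (tendsto_div_rpow_of_mul_le (by norm_num) hθ0 hθ1 hz hz_pos hlower).const_mul (2 * (1 - θ))

end klCounterexample

open klCounterexample

/-- the counterexample function `f` is continuous at `0`, has
quadratic growth at `0`, yet along `z_k = 1/(k-1)` one has `2 z_k ∈ ∂f(z_k)`
with normalized subgradients tending to `0` for every exponent `θ ∈ [0,1)`;
hence `f` fails the KŁ property at `0` with every exponent `θ ∈ [0,1)`. -/
theorem statement_17 (f : ℝ → ℝ)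
    (hf : f = fun x => if x = 0 then 0
      else if 1 / 2 < |x| then x ^ 2 + 1 / 4
      else x ^ 2 + 1 / ((⌊|x|⁻¹⌋₊ : ℝ) + 1) - 1 / ((⌊|x|⁻¹⌋₊ : ℝ) + 1) ^ 2) :
    ContinuousAt f 0 ∧
      (∃ ε : ℝ, 0 < ε ∧ ∀ x : ℝ, |x| ≤ ε → f 0 + 1 / 2 * x ^ 2 ≤ f x) ∧
      (∀ k : ℕ, 3 ≤ k → (2 * (1 / ((k : ℝ) - 1))) ∈ LimSubgrad1 f (1 / ((k : ℝ) - 1))) ∧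
      (∀ θ : ℝ, 0 ≤ θ → θ < 1 →
        Tendsto (fun k : ℕ => (1 - θ) * (2 * (1 / ((k : ℝ) - 1))) /
            (f (1 / ((k : ℝ) - 1)) - f 0) ^ θ) atTop (nhds 0)) ∧
      (∀ θ : ℝ, 0 ≤ θ → θ < 1 →
        ¬ ∃ μ : ℝ, 0 < μ ∧ ∃ ε : ℝ, 0 < ε ∧ ∃ ν : ℝ, 0 < ν ∧
          ∀ x : ℝ, |x| ≤ ε → f 0 < f x → f x < f 0 + ν →
            ENNReal.ofReal ((μ / (1 - θ)) * (f x - f 0) ^ θ) ≤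
              EMetric.infEdist 0 (LimSubgrad1 f x)) := by
  obtain rfl : f = klCounterexample := hf
  obtain ⟨hz, hz_pos⟩ := tendsto_nhdsWithin_iff.mp tendsto_one_div_natCast_sub_one_nhdsGT
  have hmem (k : ℕ) (hk : 3 ≤ k) :
      2 * (1 / ((k : ℝ) - 1)) ∈ LimSubgrad1 klCounterexample (1 / ((k : ℝ) - 1)) :=
    regSubgrad1_subset_limSubgrad1 _ _ (two_mul_mem_regSubgrad1 hk)
  refine ⟨continuousAt_zero, ⟨1, one_pos, fun x _ => ?_⟩, hmem,
    fun θ => tendsto_ratio_one_div_sub_one, ?_⟩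
  · nlinarith [sq_le x, apply_zero]
  rintro θ hθ0 hθ1 ⟨μ, hμ, ε, hε, ν, hν, hKL⟩
  refine not_hasKLPropertyAt_of_tendsto hθ1 hz (continuousAt_zero.tendsto.comp hz) ?_
    ((eventually_ge_atTop 3).mono hmem) ?_
    ⟨μ, hμ, ε, hε, ν, hν, fun x hx => hKL x (by simpa using hx)⟩
  · filter_upwards [eventually_ge_atTop 3, hz_pos] with k hk hzk
    rw [apply_zero]
    exact (mul_pos (by norm_num) hzk).trans_le (quarter_mul_le_apply_one_div_sub_one hk)
  · refine (tendsto_ratio_one_div_sub_one hθ0 hθ1).congr' ?_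
    filter_upwards [hz_pos] with k hzk
    rw [abs_of_pos (mul_pos two_pos hzk)]
end
end

section
/- Let F(x) := f(x) + μ‖x‖₁ where f : ℝⁿ → ℝ is twice continuously differentiable and μ > 0, and let x̄ satisfy 0 ∈ ∂F(x̄) with 0 ∈ relint ∂F(x̄), so that the index sets K⁺ = {i : x̄_i = 0, (∇f(x̄))_i = μ} and K⁻ = {i : x̄_i = 0, (∇f(x̄))_i = −μ} are empty. Let J := {i : x̄_i ≠ 0} and I := {i : x̄_i = 0}. If the submatrix [∇²f(x̄)]_{J,J} is nonsingular, then for every v ∈ D(∂F)(x̄|0)(w) with w ≠ 0 one has v ≠ 0, where v ∈ D(∂F)(x̄|0)(w) if and only if w_j = 0 for all j ∈ I and v_j = (∇²f(x̄)w)_j for all j ∈ J. -/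
open Filter Topology
open scoped Classical
noncomputable section
/-- for `F = f + μ‖·‖₁` with `0 ∈ relint ∂F(xb)` (so `K⁺ = K⁻ = ∅`)
and nonsingular Hessian submatrix on `J = {j : xb_j ≠ 0}`, every
`v ∈ D(∂F)(xb|0)(w)` with `w ≠ 0` is nonzero, where membership
`v ∈ D(∂F)(xb|0)(w)` is characterized by `w_i = 0` for `i ∈ I = {i : xb_i = 0}`
and `v_j = (∇²f(xb)w)_j` for `j ∈ J`. -/
theorem statement_19 {n : ℕ} (f : En n → ℝ) (μ : ℝ) (hμ : 0 < μ)
    (hf : ContDiff ℝ 2 f)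
    (F : En n → ℝ) (hF : F = fun x => f x + μ * ∑ i, |x i|)
    (xb : En n) (g : En n → En n) (hg : ∀ x, HasGradientAt f (g x) x)
    (H : Matrix (Fin n) (Fin n) ℝ) (hsymm : H.IsSymm)
    (hhess : HasFDerivAt g (Matrix.toEuclideanCLM (𝕜 := ℝ) H : En n →L[ℝ] En n) xb)
    (hrelint : ∀ i : Fin n, xb i = 0 → |g xb i| < μ)
    (hstat : ∀ j : Fin n, xb j ≠ 0 → g xb j + μ * Real.sign (xb j) = 0)
    (hJJ : (H.submatrix (fun j : {j : Fin n // xb j ≠ 0} => (j : Fin n))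
        (fun j : {j : Fin n // xb j ≠ 0} => (j : Fin n))).det ≠ 0) :
    ∀ w v : En n, w ≠ 0 →
      (∀ i : Fin n, xb i = 0 → w i = 0) →
      (∀ j : Fin n, xb j ≠ 0 → v j = (Matrix.toEuclideanCLM (𝕜 := ℝ) H) w j) →
      v ≠ 0 := by
  intro w v hw hwI hvJ
  intro hv0
  have happ : ∀ j, (Matrix.toEuclideanCLM (𝕜 := ℝ) H) w j = H.mulVec (fun i => w i) j := by
    intro j
    exact congrFun (Matrix.ofLp_toEuclideanCLM (𝕜 := ℝ) H w) j
  have hmvJ : (H.submatrix (fun j : {j : Fin n // xb j ≠ 0} => (j : Fin n))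
        (fun j : {j : Fin n // xb j ≠ 0} => (j : Fin n))).mulVec
        (fun i : {j : Fin n // xb j ≠ 0} => w i) = 0 := by
    funext j
    have h1 : H.mulVec (fun i => w i) j = 0 := by
      rw [← happ, ← hvJ j j.2, hv0]; rfl
    rw [Pi.zero_apply, ← h1]
    simp only [Matrix.mulVec, dotProduct, Matrix.submatrix_apply]
    rw [← Finset.sum_subtype (Finset.filter (fun i => xb i ≠ 0) Finset.univ)
      (by simp) (fun i => H j i * w i)]
    refine Finset.sum_filter_of_ne ?_
    intro i _ hne h0
    exact hne (by rw [hwI i h0, mul_zero])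
  have hwJ : (fun i : {j : Fin n // xb j ≠ 0} => w i) = 0 :=
    Matrix.eq_zero_of_mulVec_eq_zero hJJ hmvJ
  apply hw
  ext i
  by_cases h : xb i = 0
  · exact hwI i h
  · exact congrFun hwJ ⟨i, h⟩
end
end
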